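/- In a Fresse left semi-model category, any morphism between cofibrant objects that has the left lifting property against all core fibrations (fibrations with fibrant target) is a weak equivalence. -/
import Mathlib


open CategoryTheory CategoryTheory.Limits

universe v u

variable {C : Type u} [Category.{v} C]

/-- `f` is a retract of `g` in the arrow category. -/
def IsRetractOf {X Y Z W : C} (f : X ⟶ Y) (g : Z ⟶ W) : Prop :=
  ∃ (u : X ⟶ Z) (r : Z ⟶ X) (v : Y ⟶ W) (s : W ⟶ Y),
    u ≫ r = 𝟙 X ∧ v ≫ s = 𝟙 Y ∧ u ≫ g = f ≫ v ∧ g ≫ s = r ≫ f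

/-- A Fresse left semi-model category: weak equivalences satisfying 2-out-of-3 and, with
cofibrations and fibrations, closed under retracts; factorizations of maps with cofibrant
domain; lifting of core cofibrations against trivial fibrations and of trivial core
cofibrations against fibrations; fibrations stable under pullback; initial object
cofibrant. -/
structure FresseLeft (C : Type u) [Category.{v} C] [HasLimits C] [HasColimits C] where
  W : MorphismProperty C
  Cof : MorphismProperty C
  Fib : MorphismProperty C
  W_comp : ∀ {X Y Z : C} (f : X ⟶ Y) (g : Y ⟶ Z), W f → W g → W (f ≫ g)
  W_cancel_left : ∀ {X Y Z : C} (f : X ⟶ Y) (g : Y ⟶ Z), W g → W (f ≫ g) → W f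
  W_cancel_right : ∀ {X Y Z : C} (f : X ⟶ Y) (g : Y ⟶ Z), W f → W (f ≫ g) → W g
  W_retract : ∀ {X Y X' Y' : C} (f : X ⟶ Y) (f' : X' ⟶ Y'),
    IsRetractOf f f' → W f' → W f
  cof_retract : ∀ {X Y X' Y' : C} (f : X ⟶ Y) (f' : X' ⟶ Y'),
    IsRetractOf f f' → Cof f' → Cof f
  fib_retract : ∀ {X Y X' Y' : C} (f : X ⟶ Y) (f' : X' ⟶ Y'),
    IsRetractOf f f' → Fib f' → Fib f
  fact_cof_trivFib : ∀ {X Y : C} (f : X ⟶ Y), Cof (initial.to X) →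
    ∃ (Z : C) (i : X ⟶ Z) (p : Z ⟶ Y), Cof i ∧ Fib p ∧ W p ∧ i ≫ p = f
  fact_trivCof_fib : ∀ {X Y : C} (f : X ⟶ Y), Cof (initial.to X) →
    ∃ (Z : C) (i : X ⟶ Z) (p : Z ⟶ Y), Cof i ∧ W i ∧ Fib p ∧ i ≫ p = f
  lift_cof_trivFib : ∀ {A B X Y : C} (i : A ⟶ B) (p : X ⟶ Y),
    Cof i → Cof (initial.to A) → Fib p → W p → HasLiftingProperty i p
  lift_trivCof_fib : ∀ {A B X Y : C} (i : A ⟶ B) (p : X ⟶ Y),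
    Cof i → Cof (initial.to A) → W i → Fib p → HasLiftingProperty i p
  fib_pullback : ∀ {P X Y Z : C} (fst : P ⟶ X) (snd : P ⟶ Y) (f : X ⟶ Z) (g : Y ⟶ Z),
    IsPullback fst snd f g → Fib f → Fib snd
  initial_cofibrant : Cof (𝟙 (⊥_ C))

namespace FresseLeft

variable [HasLimits C] [HasColimits C] (M : FresseLeft C)

/-- Cofibrant objects. -/
def Cofibrant (X : C) : Prop := M.Cof (initial.to X)

/-- Fibrant objects. -/
def Fibrant (X : C) : Prop := M.Fib (terminal.from X)

end FresseLeft

/-- In a Fresse left semi-model category, any morphism between cofibrant objects with the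
left lifting property against all core fibrations (fibrations with fibrant target) is a
weak equivalence. -/
theorem llp_core_fib_is_weq [HasLimits C] [HasColimits C] (M : FresseLeft C)
    {X Y : C} (f : X ⟶ Y) (hX : M.Cofibrant X) (hY : M.Cofibrant Y)
    (h : ∀ {A B : C} (g : A ⟶ B), M.Fib g → M.Fibrant B → HasLiftingProperty f g) :
    M.W f := by
  -- Fibrant replacement of Y
  obtain ⟨Y', j, q, hjCof, hjW, hqFib, hjq⟩ := M.fact_trivCof_fib (terminal.from Y) hY
  have hY'fib : M.Fibrant Y' := by
    have : q = terminal.from Y' := Subsingleton.elim _ _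
    rw [FresseLeft.Fibrant, ← this]; exact hqFib
  -- Cofibrancy facts
  -- Factor f ≫ j as trivial cofibration followed by fibration
  obtain ⟨Z, i, p, hiCof, hiW, hpFib, hip⟩ := M.fact_trivCof_fib (f ≫ j) hX
  -- Lift f against p
  have hfp : HasLiftingProperty f p := h p hpFib hY'fib
  have sq1 : CommSq i f p j := ⟨by rw [hip]⟩
  obtain ⟨⟨⟨L, hL1, hL2⟩⟩⟩ := hfp.sq_hasLift sq1
  -- Lift j against p
  have hjp : HasLiftingProperty j p := M.lift_trivCof_fib j p hjCof hY hjW hpFib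
  have sq2 : CommSq L j p (𝟙 Y') := ⟨by simp [hL2]⟩
  obtain ⟨⟨⟨v, hv1, hv2⟩⟩⟩ := hjp.sq_hasLift sq2
  -- f ≫ j is a retract of i
  have hret : IsRetractOf (f ≫ j) i :=
    ⟨𝟙 X, 𝟙 X, v, p, by simp, by simpa using hv2, by
      simp only [Category.id_comp, Category.assoc, hv1, hL1], by
      simp [hip]⟩
  have hWfj : M.W (f ≫ j) := M.W_retract _ _ hret hiW
  exact M.W_cancel_left f j hjW hWfj
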